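/- arXiv:1512.04762 — 2 statements merged into one kernel-verified Lean document; each statement's English description precedes it below -/
import Mathlib

section
/- Suppose u(x,t) is a classical solution of the Camassa–Holm equation u_t − u_{txx} + 2ωu_x + 3uu_x = 2u_xu_{xx} + uu_{xxx}, and set m = u − u_{xx}. If m + ω > 0 everywhere, then the pointwise identity (√((m+ω)/ω))_t = −(u·√((m+ω)/ω))_x holds. -/
noncomputable def pdx (f : ℝ×ℝ → ℝ) : ℝ×ℝ → ℝ := fun p => fderiv ℝ f p (1,0)
noncomputable def pdt (f : ℝ×ℝ → ℝ) : ℝ×ℝ → ℝ := fun p => fderiv ℝ f p (0,1)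

lemma pdx_smooth {f : ℝ×ℝ → ℝ} (hf : ContDiff ℝ (⊤ : ℕ∞) f) : ContDiff ℝ (⊤ : ℕ∞) (pdx f) :=
  (hf.fderiv_right (by simp)).clm_apply contDiff_const

lemma pdt_smooth {f : ℝ×ℝ → ℝ} (hf : ContDiff ℝ (⊤ : ℕ∞) f) : ContDiff ℝ (⊤ : ℕ∞) (pdt f) :=
  (hf.fderiv_right (by simp)).clm_apply contDiff_const

lemma hasDerivAt_px (f : ℝ×ℝ → ℝ) (hf : Differentiable ℝ f) (x t : ℝ) :
    HasDerivAt (fun x' => f (x', t)) (pdx f (x,t)) x := by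
  have h2 : HasDerivAt (fun x' : ℝ => ((x', t) : ℝ×ℝ)) ((1:ℝ), (0:ℝ)) x :=
    (hasDerivAt_id x).prodMk (hasDerivAt_const x t)
  exact (hf (x,t)).hasFDerivAt.comp_hasDerivAt x h2

lemma hasDerivAt_pt (f : ℝ×ℝ → ℝ) (hf : Differentiable ℝ f) (x t : ℝ) :
    HasDerivAt (fun t' => f (x, t')) (pdt f (x,t)) t := by
  have h2 : HasDerivAt (fun t' : ℝ => ((x, t') : ℝ×ℝ)) ((0:ℝ), (1:ℝ)) t :=
    (hasDerivAt_const t x).prodMk (hasDerivAt_id t)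
  exact (hf (x,t)).hasFDerivAt.comp_hasDerivAt t h2

lemma deriv_px (f : ℝ×ℝ → ℝ) (hf : Differentiable ℝ f) (x t : ℝ) :
    deriv (fun x' => f (x', t)) x = pdx f (x,t) := (hasDerivAt_px f hf x t).deriv

lemma deriv_pt (f : ℝ×ℝ → ℝ) (hf : Differentiable ℝ f) (x t : ℝ) :
    deriv (fun t' => f (x, t')) t = pdt f (x,t) := (hasDerivAt_pt f hf x t).deriv

lemma pd_apply (f : ℝ×ℝ → ℝ) (hf : ContDiff ℝ (⊤ : ℕ∞) f) (p : ℝ×ℝ) (v w : ℝ×ℝ) :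
    fderiv ℝ (fun q => fderiv ℝ f q v) p w = fderiv ℝ (fderiv ℝ f) p w v := by
  have hdf : Differentiable ℝ (fderiv ℝ f) := (hf.fderiv_right (m := (⊤ : ℕ∞)) (by simp)).differentiable (by simp)
  have h : HasFDerivAt (fun q => fderiv ℝ f q v)
      ((ContinuousLinearMap.apply ℝ ℝ v).comp (fderiv ℝ (fderiv ℝ f) p)) p :=
    (ContinuousLinearMap.apply ℝ ℝ v).hasFDerivAt.comp p (hdf p).hasFDerivAt
  rw [h.fderiv]; rfl

lemma pd_comm {f : ℝ×ℝ → ℝ} (hf : ContDiff ℝ (⊤ : ℕ∞) f) : pdx (pdt f) = pdt (pdx f) := by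
  funext p
  have hdf : Differentiable ℝ (fderiv ℝ f) := (hf.fderiv_right (m := (⊤ : ℕ∞)) (by simp)).differentiable (by simp)
  have hsym := second_derivative_symmetric_of_eventually
    (f := f) (f' := fderiv ℝ f) (f'' := fderiv ℝ (fderiv ℝ f) p) (x := p)
    (Filter.Eventually.of_forall fun y => (hf.differentiable (by simp) y).hasFDerivAt)
    (hdf p).hasFDerivAt
  show fderiv ℝ (fun q => fderiv ℝ f q (0,1)) p (1,0) = fderiv ℝ (fun q => fderiv ℝ f q (1,0)) p (0,1)
  rw [pd_apply f hf, pd_apply f hf, hsym]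

/-- Local conservation law for the Camassa–Holm equation: if `u` is a smooth
solution of `u_t − u_{txx} + 2ωu_x + 3uu_x = 2u_xu_{xx} + uu_{xxx}` and
`m = u − u_{xx}` satisfies `m + ω > 0` everywhere, then
`(√((m+ω)/ω))_t = −(u·√((m+ω)/ω))_x` pointwise. -/
theorem CH_local_conservation_law
    (ω : ℝ) (hω : 0 < ω) (u : ℝ → ℝ → ℝ)
    (hu : ContDiff ℝ (⊤ : ℕ∞) (fun p : ℝ × ℝ => u p.1 p.2))
    -- partial derivatives in x
    (ux uxx uxxx ut utxx m : ℝ → ℝ → ℝ)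
    (hux : ∀ x t, ux x t = deriv (fun x' => u x' t) x)
    (huxx : ∀ x t, uxx x t = deriv (fun x' => ux x' t) x)
    (huxxx : ∀ x t, uxxx x t = deriv (fun x' => uxx x' t) x)
    (hut : ∀ x t, ut x t = deriv (fun t' => u x t') t)
    (hutxx : ∀ x t, utxx x t = deriv (fun x' => deriv (fun x'' => ut x'' t) x') x)
    (hm : ∀ x t, m x t = u x t - uxx x t)
    -- the Camassa–Holm equation
    (hCH : ∀ x t, ut x t - utxx x t + 2*ω*(ux x t) + 3*(u x t)*(ux x t)
        = 2*(ux x t)*(uxx x t) + (u x t)*(uxxx x t))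
    -- positivity of momentum
    (hpos : ∀ x t, m x t + ω > 0) :
    ∀ x t, deriv (fun t' => Real.sqrt ((m x t' + ω)/ω)) t
      = -(deriv (fun x' => u x' t * Real.sqrt ((m x' t + ω)/ω)) x) := by
  set F : ℝ×ℝ → ℝ := fun p => u p.1 p.2 with hF
  have hFs : ContDiff ℝ (⊤ : ℕ∞) F := hu
  have hFd : Differentiable ℝ F := hFs.differentiable (by simp)
  have hPx : ContDiff ℝ (⊤ : ℕ∞) (pdx F) := pdx_smooth hFs
  have hPxx : ContDiff ℝ (⊤ : ℕ∞) (pdx (pdx F)) := pdx_smooth hPx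
  have hPt : ContDiff ℝ (⊤ : ℕ∞) (pdt F) := pdt_smooth hFs
  have hPtx : ContDiff ℝ (⊤ : ℕ∞) (pdx (pdt F)) := pdx_smooth hPt
  -- identify the named partials
  have hux' : ∀ x t, ux x t = pdx F (x,t) := fun x t => by
    rw [hux]; exact deriv_px F hFd x t
  have huxx' : ∀ x t, uxx x t = pdx (pdx F) (x,t) := fun x t => by
    rw [huxx]
    have : (fun x' => ux x' t) = fun x' => pdx F (x',t) := funext fun x' => hux' x' t
    rw [this]; exact deriv_px (pdx F) (hPx.differentiable (by simp)) x t
  have huxxx' : ∀ x t, uxxx x t = pdx (pdx (pdx F)) (x,t) := fun x t => by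
    rw [huxxx]
    have : (fun x' => uxx x' t) = fun x' => pdx (pdx F) (x',t) := funext fun x' => huxx' x' t
    rw [this]; exact deriv_px (pdx (pdx F)) (hPxx.differentiable (by simp)) x t
  have hut' : ∀ x t, ut x t = pdt F (x,t) := fun x t => by
    rw [hut]; exact deriv_pt F hFd x t
  have hutxx' : ∀ x t, utxx x t = pdx (pdx (pdt F)) (x,t) := fun x t => by
    rw [hutxx]
    have h1 : (fun x' => deriv (fun x'' => ut x'' t) x') = fun x' => pdx (pdt F) (x',t) := by
      funext x'
      have : (fun x'' => ut x'' t) = fun x'' => pdt F (x'',t) := funext fun x'' => hut' x'' t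
      rw [this]; exact deriv_px (pdt F) (hPt.differentiable (by simp)) x' t
    rw [h1]; exact deriv_px (pdx (pdt F)) (hPtx.differentiable (by simp)) x t
  -- the momentum as a function on the plane
  set M : ℝ×ℝ → ℝ := fun p => F p - pdx (pdx F) p with hM
  have hMs : ContDiff ℝ (⊤ : ℕ∞) M := hFs.sub hPxx
  have hMd : Differentiable ℝ M := hMs.differentiable (by simp)
  have hm' : ∀ x t, m x t = M (x,t) := fun x t => by
    rw [hm x t, huxx' x t]
  -- m_x and m_t
  have hmx : ∀ x t, pdx M (x,t) = ux x t - uxxx x t := fun x t => by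
    have : pdx M (x,t) = pdx F (x,t) - pdx (pdx (pdx F)) (x,t) := by
      show fderiv ℝ (fun p => F p - pdx (pdx F) p) (x,t) (1,0) = _
      rw [fderiv_fun_sub (hFd (x,t)) (hPxx.differentiable (by simp) (x,t))]; rfl
    rw [this, hux', huxxx']
  have hmt : ∀ x t, pdt M (x,t) = ut x t - utxx x t := fun x t => by
    have h1 : pdt M (x,t) = pdt F (x,t) - pdt (pdx (pdx F)) (x,t) := by
      show fderiv ℝ (fun p => F p - pdx (pdx F) p) (x,t) (0,1) = _
      rw [fderiv_fun_sub (hFd (x,t)) (hPxx.differentiable (by simp) (x,t))]; rfl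
    have h2 : pdt (pdx (pdx F)) = pdx (pdx (pdt F)) := by
      rw [← pd_comm hPx, ← pd_comm hFs]
    rw [h1, h2, hut', hutxx']
  -- the transport identity for m
  have key : ∀ x t, pdt M (x,t) = -(u x t * pdx M (x,t) + 2 * ux x t * (m x t + ω)) := by
    intro x t
    have h := hCH x t
    rw [hmt, hmx, hm x t]
    nlinarith [h]
  intro x t
  have hmxt := hpos x t
  set s : ℝ := Real.sqrt ((m x t + ω)/ω) with hs
  have hq : (0:ℝ) < (m x t + ω)/ω := div_pos hmxt hω
  have hspos : 0 < s := Real.sqrt_pos.mpr hq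
  have hs2 : s^2 = (m x t + ω)/ω := Real.sq_sqrt hq.le
  -- derivative of sqrt at the relevant point
  have hsq : HasDerivAt Real.sqrt (1/(2*s)) ((m x t + ω)/ω) := by
    simpa [← hs] using Real.hasDerivAt_sqrt hq.ne'
  -- LHS
  have hL : HasDerivAt (fun t' => Real.sqrt ((m x t' + ω)/ω))
      (1/(2*s) * (pdt M (x,t)/ω)) t := by
    have hinner : HasDerivAt (fun t' => (m x t' + ω)/ω) (pdt M (x,t)/ω) t := by
      have : (fun t' => (m x t' + ω)/ω) = fun t' => (M (x,t') + ω)/ω := by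
        funext t'; rw [hm']
      rw [this]
      exact ((hasDerivAt_pt M hMd x t).add_const ω).div_const ω
    exact hsq.comp t hinner
  -- RHS
  have hRB : HasDerivAt (fun x' => Real.sqrt ((m x' t + ω)/ω))
      (1/(2*s) * (pdx M (x,t)/ω)) x := by
    have hinner : HasDerivAt (fun x' => (m x' t + ω)/ω) (pdx M (x,t)/ω) x := by
      have : (fun x' => (m x' t + ω)/ω) = fun x' => (M (x',t) + ω)/ω := by
        funext x'; rw [hm']
      rw [this]
      exact ((hasDerivAt_px M hMd x t).add_const ω).div_const ω
    exact hsq.comp x hinner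
  have hRA : HasDerivAt (fun x' => u x' t) (pdx F (x,t)) x := hasDerivAt_px F hFd x t
  have hR : HasDerivAt (fun x' => u x' t * Real.sqrt ((m x' t + ω)/ω))
      (pdx F (x,t) * s + u x t * (1/(2*s) * (pdx M (x,t)/ω))) x := hRA.mul hRB
  rw [hL.deriv, hR.deriv]
  rw [← hux' x t]
  have hk := key x t
  have hω' : (ω:ℝ) ≠ 0 := hω.ne'
  have hs2' : s^2*ω = m x t + ω := by rw [hs2]; field_simp
  field_simp
  linear_combination hk + 2*(ux x t)*hs2'
end

section
/- Let κ ∈ (0,1/2) and δ > 0. The map y ↦ y + log[(1 + δe^{−2κ y}·(1+2κ)/(1−2κ))/(1 + δe^{−2κ y}·(1−2κ)/(1+2κ))] is a strictly increasing bijection from ℝ to ℝ. -/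
/-!
Write `E = e^{-2κy}`, `a = δ(1+2κ)/(1-2κ)` and `b = δ(1-2κ)/(1+2κ)`, so that the map is
`y ↦ y + log ((1 + aE)/(1 + bE))`. Since `ab = δ²` and `a + b - 2κ(a - b) = 2δ`, its derivative
`1 - 2κ(a - b)E/((1 + aE)(1 + bE))` equals `(1 + δE)²/((1 + aE)(1 + bE)) > 0`. Since `b ≤ a`, the
ratio `(1 + aE)/(1 + bE)` lies between `1` and `a/b`, so the map differs from the identity by a
bounded amount and is therefore onto.
-/

open Real Filter

theorem Continuous.surjective_of_abs_sub_le {f : ℝ → ℝ} (hf : Continuous f) {C : ℝ}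
    (hC : ∀ x, |f x - x| ≤ C) : Function.Surjective f := by
  refine hf.surjective ?_ ?_
  · refine tendsto_atTop_mono (fun x => ?_) (tendsto_atTop_add_const_right _ (-C) tendsto_id)
    linarith [(abs_le.mp (hC x)).1, show id x = x from rfl]
  · refine tendsto_atBot_mono (fun x => ?_) (tendsto_atBot_add_const_right _ C tendsto_id)
    linarith [(abs_le.mp (hC x)).2, show id x = x from rfl]

theorem log_one_add_mul_div_one_add_mul_mem_Icc {a b t : ℝ} (hb : 0 < b) (hab : b ≤ a)
    (ht : 0 ≤ t) :
    log ((1 + a * t) / (1 + b * t)) ∈ Set.Icc 0 (log (a / b)) := by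
  have hbt : 0 < 1 + b * t := by positivity
  constructor
  · exact log_nonneg ((one_le_div hbt).mpr (by nlinarith))
  · refine log_le_log (div_pos (by nlinarith) hbt) ?_
    rw [div_le_div_iff₀ hbt hb]
    nlinarith

noncomputable def solitonChange (a b c y : ℝ) : ℝ :=
  y + log ((1 + a * exp (c * y)) / (1 + b * exp (c * y)))

theorem hasDerivAt_solitonChange {a b : ℝ} (ha : 0 ≤ a) (hb : 0 ≤ b) (c y : ℝ) :
    HasDerivAt (solitonChange a b c)
      (1 + c * (a - b) * exp (c * y) / ((1 + a * exp (c * y)) * (1 + b * exp (c * y)))) y := by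
  have hpos : ∀ (k z : ℝ), 0 ≤ k → 0 < 1 + k * exp (c * z) := fun k z hk => by positivity
  have hlog : ∀ k, 0 ≤ k → HasDerivAt (fun z => log (1 + k * exp (c * z)))
      (k * (exp (c * y) * c) / (1 + k * exp (c * y))) y := fun k hk =>
    ((((hasDerivAt_id y).const_mul c).exp.const_mul k).const_add 1 |>.log
      (hpos k y hk).ne').congr_deriv (by simp)
  have hsplit : solitonChange a b c = fun z =>
      z + (log (1 + a * exp (c * z)) - log (1 + b * exp (c * z))) := by
    funext z
    rw [solitonChange, log_div (hpos a z ha).ne' (hpos b z hb).ne']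
  rw [hsplit]
  refine ((hasDerivAt_id' y).add ((hlog a ha).sub (hlog b hb))).congr_deriv ?_
  field_simp
  ring

theorem continuous_solitonChange {a b : ℝ} (ha : 0 ≤ a) (hb : 0 ≤ b) (c : ℝ) :
    Continuous (solitonChange a b c) :=
  continuous_iff_continuousAt.mpr fun y => (hasDerivAt_solitonChange ha hb c y).continuousAt

theorem abs_solitonChange_sub_self_le {a b : ℝ} (hb : 0 < b) (hab : b ≤ a) (c y : ℝ) :
    |solitonChange a b c y - y| ≤ log (a / b) := by
  obtain ⟨h₀, h₁⟩ := log_one_add_mul_div_one_add_mul_mem_Icc hb hab (exp_pos (c * y)).le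
  rw [solitonChange, add_sub_cancel_left, abs_of_nonneg h₀]
  exact h₁

theorem surjective_solitonChange {a b : ℝ} (hb : 0 < b) (hab : b ≤ a) (c : ℝ) :
    Function.Surjective (solitonChange a b c) :=
  (continuous_solitonChange (hb.le.trans hab) hb.le c).surjective_of_abs_sub_le
    (abs_solitonChange_sub_self_le hb hab c)

section OneSoliton

variable {κ δ : ℝ}

theorem oneSoliton_coeff_le (hκ₀ : 0 < κ) (hκ₁ : κ < 1 / 2) (hδ : 0 ≤ δ) :
    δ * (1 - 2 * κ) / (1 + 2 * κ) ≤ δ * (1 + 2 * κ) / (1 - 2 * κ) := by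
  rw [div_le_div_iff₀ (by linarith) (by linarith)]
  nlinarith [mul_nonneg hδ hκ₀.le]

theorem strictMono_solitonChange_oneSoliton (hκ₀ : 0 < κ) (hκ₁ : κ < 1 / 2) (hδ : 0 ≤ δ) :
    StrictMono (solitonChange (δ * (1 + 2 * κ) / (1 - 2 * κ)) (δ * (1 - 2 * κ) / (1 + 2 * κ))
      (-2 * κ)) := by
  set a := δ * (1 + 2 * κ) / (1 - 2 * κ)
  set b := δ * (1 - 2 * κ) / (1 + 2 * κ)
  have ha : 0 ≤ a := div_nonneg (by positivity) (by linarith)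
  have hb : 0 ≤ b := div_nonneg (mul_nonneg hδ (by linarith)) (by positivity)
  have hsq : ∀ t, (1 + a * t) * (1 + b * t) + -2 * κ * (a - b) * t = (1 + δ * t) ^ 2 := by
    intro t
    have hm : 1 - 2 * κ ≠ 0 := by linarith
    have hp : 1 + 2 * κ ≠ 0 := by linarith
    simp only [a, b]
    field_simp
    ring
  refine strictMono_of_deriv_pos fun y => ?_
  rw [(hasDerivAt_solitonChange ha hb _ y).deriv]
  have hD : 0 < (1 + a * exp (-2 * κ * y)) * (1 + b * exp (-2 * κ * y)) := by positivity
  rw [one_add_div hD.ne', hsq]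
  positivity

end OneSoliton

/-- The change of variables `x = x(y)` in the parametric one-soliton
representation: for `κ ∈ (0,1/2)` and `δ > 0`, the map
`y ↦ y + log[(1 + δe^{−2κy}(1+2κ)/(1−2κ))/(1 + δe^{−2κy}(1−2κ)/(1+2κ))]`
is a strictly increasing bijection of `ℝ` onto `ℝ`. -/
theorem soliton_change_of_variables (κ δ : ℝ)
    (hκ₀ : 0 < κ) (hκ₁ : κ < 1/2) (hδ : 0 < δ) :
    StrictMono (fun y : ℝ => y + Real.log
      ((1 + δ * Real.exp (-2*κ*y) * (1 + 2*κ)/(1 - 2*κ)) /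
       (1 + δ * Real.exp (-2*κ*y) * (1 - 2*κ)/(1 + 2*κ)))) ∧
    Function.Bijective (fun y : ℝ => y + Real.log
      ((1 + δ * Real.exp (-2*κ*y) * (1 + 2*κ)/(1 - 2*κ)) /
       (1 + δ * Real.exp (-2*κ*y) * (1 - 2*κ)/(1 + 2*κ)))) := by
  have hfun : (fun y : ℝ => y + Real.log
      ((1 + δ * Real.exp (-2*κ*y) * (1 + 2*κ)/(1 - 2*κ)) /
       (1 + δ * Real.exp (-2*κ*y) * (1 - 2*κ)/(1 + 2*κ)))) =
      solitonChange (δ * (1 + 2 * κ) / (1 - 2 * κ)) (δ * (1 - 2 * κ) / (1 + 2 * κ)) (-2 * κ) := by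
    funext y
    rw [solitonChange]
    ring_nf
  have hmono := strictMono_solitonChange_oneSoliton hκ₀ hκ₁ hδ.le
  have hb : 0 < δ * (1 - 2 * κ) / (1 + 2 * κ) := div_pos (mul_pos hδ (by linarith)) (by linarith)
  rw [hfun]
  exact ⟨hmono, hmono.injective,
    surjective_solitonChange hb (oneSoliton_coeff_le hκ₀ hκ₁ hδ.le) _⟩
end
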